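/- arXiv:1710.08954 — 2 statements merged into one kernel-verified Lean document; each statement's English description precedes it below -/
import Mathlib

section
/- Basic-Step setup: n = r+s, A₁,…,A_m, C are symmetric n×n real matrices with A₁ = fromBlocks(D,0,0,0) for an r×r positive definite matrix D, and b ∈ ℝᵐ with b₁ = 0. Then the set of attainable primal objective values is unchanged by the reduction: {C • X : X ⪰ 0, Aᵢ • X = bᵢ for all i = 1,…,m} = {C₂₂ • Y : Y is s×s, Y ⪰ 0, (Aᵢ)₂₂ • Y = bᵢ for all i = 2,…,m}. In particular (P) and (P_pre) have the same optimal value. -/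
/-!
If `X ⪰ 0` is feasible for (P), then `0 = A₁ • X = D • X₁₁` with `D ≻ 0` and `X₁₁ ⪰ 0`,
which forces `X₁₁ = 0`. A positive semidefinite matrix with a zero diagonal entry has the whole
row and column of that entry equal to zero, so `X = fromBlocks 0 0 0 X₂₂`, and every constraint
and the objective only see the blocks `(Aᵢ)₂₂`, `C₂₂` against `X₂₂ ⪰ 0`. Conversely
`Y ↦ fromBlocks 0 0 0 Y` maps feasible points of (P_pre) to feasible points of (P) with the same
objective value.
-/

open Matrix
open scoped ComplexOrder

namespace Matrix

variable {𝕜 R α β : Type*} [Fintype α] [Fintype β]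

lemma trace_fromBlocks [AddCommMonoid R] (A : Matrix α α R) (B : Matrix α β R)
    (C : Matrix β α R) (D : Matrix β β R) :
    (fromBlocks A B C D).trace = A.trace + D.trace := by
  simp [trace, Fintype.sum_sum_type]

lemma trace_fromBlocks_corner₁₁_mul [NonUnitalNonAssocSemiring R] (A : Matrix α α R)
    (X : Matrix (α ⊕ β) (α ⊕ β) R) :
    (fromBlocks A 0 0 0 * X).trace = (A * X.toBlocks₁₁).trace := by
  rw [← fromBlocks_toBlocks X, fromBlocks_multiply, trace_fromBlocks]
  simp

lemma trace_mul_fromBlocks_corner₂₂ [NonUnitalNonAssocSemiring R]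
    (M : Matrix (α ⊕ β) (α ⊕ β) R) (Y : Matrix β β R) :
    (M * fromBlocks 0 0 0 Y).trace = (M.toBlocks₂₂ * Y).trace := by
  rw [← fromBlocks_toBlocks M, fromBlocks_multiply, trace_fromBlocks]
  simp

variable [RCLike 𝕜]

lemma PosSemidef.fromBlocks_corner₂₂ [DecidableEq β] {Y : Matrix β β 𝕜} (hY : Y.PosSemidef) :
    (fromBlocks (0 : Matrix α α 𝕜) 0 0 Y).PosSemidef := by
  have := hY.conjTranspose_mul_mul_same (fromCols (0 : Matrix β α 𝕜) (1 : Matrix β β 𝕜))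
  simpa [conjTranspose_fromCols_eq_fromRows_conjTranspose, fromRows_mul, mul_fromCols,
    ← fromCols_fromRows_eq_fromBlocks] using this

lemma PosSemidef.apply_eq_zero_of_diag_eq_zero {X : Matrix α α 𝕜} (hX : X.PosSemidef) {i : α}
    (hi : X i i = 0) (j : α) : X j i = 0 := by
  classical
  have h := (hX.dotProduct_mulVec_zero_iff (Pi.single i 1)).mp (by simp [hi])
  simpa using congrFun h j

open scoped MatrixOrder in
lemma PosDef.eq_zero_of_trace_mul_eq_zero {D M : Matrix α α 𝕜} (hD : D.PosDef)
    (hM : M.PosSemidef) (h : (D * M).trace = 0) : M = 0 := by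
  classical
  obtain ⟨B, rfl⟩ := CStarAlgebra.nonneg_iff_eq_star_mul_self.mp hM.nonneg
  have hBDB : B * D * Bᴴ = 0 := by
    rwa [← (hD.posSemidef.mul_mul_conjTranspose_same B).trace_eq_zero_iff, trace_mul_cycle,
      trace_mul_comm]
  have hB : Bᴴ = 0 := by
    refine ext_iff_mulVec.mpr fun x => ?_
    by_contra hx
    have hpos := hD.dotProduct_mulVec_pos (x := Bᴴ *ᵥ x) (by simpa using hx)
    simp only [star_mulVec, conjTranspose_conjTranspose, mulVec_mulVec, dotProduct_mulVec,
      vecMul_vecMul, ← Matrix.mul_assoc] at hpos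
    simp [hBDB] at hpos
  rw [star_eq_conjTranspose, hB, zero_mul]

lemma PosSemidef.eq_fromBlocks_corner₂₂_of_toBlocks₁₁_eq_zero {X : Matrix (α ⊕ β) (α ⊕ β) 𝕜}
    (hX : X.PosSemidef) (h : X.toBlocks₁₁ = 0) : X = fromBlocks 0 0 0 X.toBlocks₂₂ := by
  have hcol (i : α) (j : α ⊕ β) : X j (Sum.inl i) = 0 :=
    hX.apply_eq_zero_of_diag_eq_zero (congrFun₂ h i i) j
  have hrow (i : α) (j : α ⊕ β) : X (Sum.inl i) j = 0 := by
    rw [← hX.isHermitian.apply, hcol, star_zero]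
  ext (i | i) (j | j) <;> simp [hcol, hrow, toBlocks₂₂]

end Matrix

theorem sieve_basic_step_values_general (r s m : ℕ)
    (A : Fin (m + 1) → Matrix (Fin r ⊕ Fin s) (Fin r ⊕ Fin s) ℝ)
    (C : Matrix (Fin r ⊕ Fin s) (Fin r ⊕ Fin s) ℝ)
    (D : Matrix (Fin r) (Fin r) ℝ) (hD : D.PosDef)
    (hA0 : A 0 = fromBlocks D 0 0 0)
    (b : Fin (m + 1) → ℝ) (hb0 : b 0 = 0) :
    {v : ℝ | ∃ X : Matrix (Fin r ⊕ Fin s) (Fin r ⊕ Fin s) ℝ,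
        X.PosSemidef ∧ (∀ i, (A i * X).trace = b i) ∧ (C * X).trace = v} =
    {v : ℝ | ∃ Y : Matrix (Fin s) (Fin s) ℝ,
        Y.PosSemidef ∧ (∀ i : Fin m, ((A i.succ).toBlocks₂₂ * Y).trace = b i.succ) ∧
        (C.toBlocks₂₂ * Y).trace = v} := by
  ext v
  constructor
  · rintro ⟨X, hX, hAX, rfl⟩
    have hX₁₁ : X.toBlocks₁₁ = 0 := hD.eq_zero_of_trace_mul_eq_zero (hX.submatrix Sum.inl)
      (by rw [← trace_fromBlocks_corner₁₁_mul, ← hA0, hAX 0, hb0])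
    rw [hX.eq_fromBlocks_corner₂₂_of_toBlocks₁₁_eq_zero hX₁₁] at hAX ⊢
    refine ⟨X.toBlocks₂₂, hX.submatrix Sum.inr, fun i => ?_,
      (trace_mul_fromBlocks_corner₂₂ C _).symm⟩
    rw [← trace_mul_fromBlocks_corner₂₂, hAX i.succ]
  · rintro ⟨Y, hY, hAY, rfl⟩
    refine ⟨fromBlocks 0 0 0 Y, hY.fromBlocks_corner₂₂, Fin.cases ?_ fun i => ?_,
      trace_mul_fromBlocks_corner₂₂ C Y⟩
    · simp [trace_mul_fromBlocks_corner₂₂, hA0, hb0]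
    · rw [trace_mul_fromBlocks_corner₂₂, hAY i]

/-- Basic-Step objective-value invariance: with `A 0 = fromBlocks D 0 0 0`, `D ≻ 0`,
`b 0 = 0`, the set of attainable primal objective values of (P) coincides with that
of the reduced problem (P_pre). -/
theorem sieve_basic_step_values (r s m : ℕ)
    (A : Fin (m + 1) → Matrix (Fin r ⊕ Fin s) (Fin r ⊕ Fin s) ℝ)
    (hA : ∀ i, (A i).IsSymm)
    (C : Matrix (Fin r ⊕ Fin s) (Fin r ⊕ Fin s) ℝ) (hC : C.IsSymm)
    (D : Matrix (Fin r) (Fin r) ℝ) (hD : D.PosDef)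
    (hA0 : A 0 = fromBlocks D 0 0 0)
    (b : Fin (m + 1) → ℝ) (hb0 : b 0 = 0) :
    {v : ℝ | ∃ X : Matrix (Fin r ⊕ Fin s) (Fin r ⊕ Fin s) ℝ,
        X.PosSemidef ∧ (∀ i, (A i * X).trace = b i) ∧ (C * X).trace = v} =
    {v : ℝ | ∃ Y : Matrix (Fin s) (Fin s) ℝ,
        Y.PosSemidef ∧ (∀ i : Fin m, ((A i.succ).toBlocks₂₂ * Y).trace = b i.succ) ∧
        (C.toBlocks₂₂ * Y).trace = v} :=
  sieve_basic_step_values_general r s m A C D hD hA0 b hb0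
end

section
/- Basic-Step setup: n = r+s, A₁,…,A_m, C are symmetric n×n real matrices with A₁ = fromBlocks(D,0,0,0) for an r×r positive definite matrix D, and b ∈ ℝᵐ with b₁ = 0. Suppose X* is feasible for (P) (X* ⪰ 0, Aᵢ • X* = bᵢ for all i), y* is feasible for (D) (C − Σᵢ yᵢ*Aᵢ ⪰ 0), and C • X* = Σᵢ bᵢyᵢ* (zero duality gap with attainment). Then for every (ỹ₂,…,ỹ_m) feasible for (D_pre) one has Σ_{i=2}^m bᵢỹᵢ ≤ Σ_{i=1}^m bᵢyᵢ*. In particular the truncation (y₂*,…,y_m*) is an optimal solution of (D_pre), so when strong duality holds, the Sieve-SDP reduction changes neither the primal nor the dual optimal value. -/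
/-!
`A₁ • X* = b₁ = 0` reads `D • X*₁₁ = 0`, and since `D ≻ 0` and `X*₁₁ ⪰ 0` this forces `X*₁₁ = 0`.
A positive semidefinite matrix with a zero diagonal entry has a zero row and column, so `X*` lives
in its lower-right block. Hence for every (D_pre)-feasible `ỹ`,
`0 ≤ (C - ∑ ỹᵢ Aᵢ)₂₂ • X*₂₂ = (C - ∑ ỹᵢ Aᵢ) • X* = C • X* - ∑ bᵢ ỹᵢ`, and `C • X* = ∑ bᵢ yᵢ*`.
The truncation of `y*` is (D_pre)-feasible because `A₁` vanishes on the lower-right block, and it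
keeps the objective value because `b₁ = 0`.
-/

open Matrix
open scoped ComplexOrder

namespace Matrix

variable {𝕜 n : Type*} [RCLike 𝕜] [Fintype n]

theorem PosSemidef.exists_eq_conjTranspose_mul_self {A : Matrix n n 𝕜} (hA : A.PosSemidef) :
    ∃ B : Matrix n n 𝕜, A = Bᴴ * B := by
  classical
  open scoped MatrixOrder in
  exact CStarAlgebra.nonneg_iff_eq_star_mul_self.mp hA.nonneg

theorem PosSemidef.trace_mul_nonneg {A B : Matrix n n 𝕜} (hA : A.PosSemidef)
    (hB : B.PosSemidef) : 0 ≤ (A * B).trace := by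
  obtain ⟨E, rfl⟩ := hA.exists_eq_conjTranspose_mul_self
  rw [Matrix.mul_assoc, trace_mul_comm]
  exact (hB.mul_mul_conjTranspose_same E).trace_nonneg

theorem PosDef.eq_zero_of_trace_mul_eq_zero_s8 {D P : Matrix n n 𝕜} (hD : D.PosDef)
    (hP : P.PosSemidef) (h : (D * P).trace = 0) : P = 0 := by
  obtain ⟨E, rfl⟩ := hP.exists_eq_conjTranspose_mul_self
  have hzero : E * D * Eᴴ = 0 :=
    (hD.posSemidef.mul_mul_conjTranspose_same E).trace_eq_zero_iff.mp
      (by rwa [← trace_mul_cycle, Matrix.mul_assoc])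
  have hE : Eᴴ = 0 := by
    refine ext_iff_mulVec.mpr fun x => ?_
    rw [zero_mulVec]
    by_contra hx
    have hpos := hD.dotProduct_mulVec_pos hx
    simp only [star_mulVec, dotProduct_mulVec, vecMul_vecMul, conjTranspose_conjTranspose,
      hzero] at hpos
    simp at hpos
  rw [hE, zero_mul]

theorem PosSemidef.apply_eq_zero_of_diag_eq_zero_s8 {M : Matrix n n 𝕜}
    (hM : M.PosSemidef) {i : n} (hi : M i i = 0) (j : n) : M j i = 0 ∧ M i j = 0 := by
  classical
  have hcol : M *ᵥ Pi.single i 1 = 0 :=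
    (hM.dotProduct_mulVec_zero_iff _).mp (by simp [mulVec_single, hi])
  have hji : M j i = 0 := by simpa [mulVec_single] using congrFun hcol j
  exact ⟨hji, by rw [← hM.isHermitian.apply, hji, star_zero]⟩

section Blocks

variable {l o : Type*} [Fintype l] [Fintype o]

theorem trace_fromBlocks_zero_mul {α : Type*} [CommSemiring α] (D : Matrix l l α)
    (X : Matrix (l ⊕ o) (l ⊕ o) α) :
    (fromBlocks D 0 0 0 * X).trace = (D * X.toBlocks₁₁).trace := by
  simp [trace, Matrix.mul_apply, Fintype.sum_sum_type, toBlocks₁₁]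

theorem trace_mul_fromBlocks_zero {α : Type*} [CommSemiring α] (M : Matrix (l ⊕ o) (l ⊕ o) α)
    (Y : Matrix o o α) :
    (M * fromBlocks 0 0 0 Y).trace = (M.toBlocks₂₂ * Y).trace := by
  simp [trace, Matrix.mul_apply, Fintype.sum_sum_type, toBlocks₂₂]

theorem PosSemidef.eq_fromBlocks_of_toBlocks₁₁_eq_zero {X : Matrix (l ⊕ o) (l ⊕ o) 𝕜}
    (hX : X.PosSemidef) (h : X.toBlocks₁₁ = 0) : X = fromBlocks 0 0 0 X.toBlocks₂₂ := by
  have hzero a := hX.apply_eq_zero_of_diag_eq_zero_s8 (congrFun (congrFun h a) a)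
  ext (a | a) (b | b) <;> simp [hzero, toBlocks₂₂]

end Blocks

theorem trace_sub_sum_smul_mul {ι α n : Type*} [Fintype ι] [Fintype n] [CommRing α]
    (C X : Matrix n n α) (A : ι → Matrix n n α) (z : ι → α) :
    ((C - ∑ i, z i • A i) * X).trace = (C * X).trace - ∑ i, z i * (A i * X).trace := by
  simp [sub_mul, Finset.sum_mul, trace_sum, smul_mul_assoc]

end Matrix

theorem sieve_strong_duality_preserved_general (r s m : ℕ)
    (A : Fin (m + 1) → Matrix (Fin r ⊕ Fin s) (Fin r ⊕ Fin s) ℝ)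
    (C : Matrix (Fin r ⊕ Fin s) (Fin r ⊕ Fin s) ℝ)
    (D : Matrix (Fin r) (Fin r) ℝ) (hD : D.PosDef)
    (hA0 : A 0 = fromBlocks D 0 0 0)
    (b : Fin (m + 1) → ℝ) (hb0 : b 0 = 0)
    (Xstar : Matrix (Fin r ⊕ Fin s) (Fin r ⊕ Fin s) ℝ) (hXstar : Xstar.PosSemidef)
    (hXfeas : ∀ i, (A i * Xstar).trace = b i)
    (ystar : Fin (m + 1) → ℝ) (hystar : (C - ∑ i, ystar i • A i).PosSemidef)
    (hgap : (C * Xstar).trace = ∑ i, b i * ystar i) :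
    (∀ z : Fin m → ℝ, ((C - ∑ i : Fin m, z i • A i.succ).toBlocks₂₂).PosSemidef →
        ∑ i : Fin m, b i.succ * z i ≤ ∑ i, b i * ystar i) ∧
    ((C - ∑ i : Fin m, ystar i.succ • A i.succ).toBlocks₂₂).PosSemidef ∧
    (∀ z : Fin m → ℝ, ((C - ∑ i : Fin m, z i • A i.succ).toBlocks₂₂).PosSemidef →
        ∑ i : Fin m, b i.succ * z i ≤ ∑ i : Fin m, b i.succ * ystar i.succ) := by
  have hX₁₁ : Xstar.toBlocks₁₁ = 0 :=
    hD.eq_zero_of_trace_mul_eq_zero_s8 (hXstar.submatrix Sum.inl)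
      (by rw [← trace_fromBlocks_zero_mul, ← hA0, hXfeas, hb0])
  have hX := hXstar.eq_fromBlocks_of_toBlocks₁₁_eq_zero hX₁₁
  have bound (z : Fin m → ℝ) (hz : ((C - ∑ i : Fin m, z i • A i.succ).toBlocks₂₂).PosSemidef) :
      ∑ i : Fin m, b i.succ * z i ≤ ∑ i, b i * ystar i := by
    have h : 0 ≤ (_ * Xstar.toBlocks₂₂).trace := hz.trace_mul_nonneg (hXstar.submatrix Sum.inr)
    rw [← trace_mul_fromBlocks_zero, ← hX, trace_sub_sum_smul_mul, hgap] at h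
    simp only [hXfeas, mul_comm (z _)] at h
    linarith
  have hobj : ∑ i, b i * ystar i = ∑ i : Fin m, b i.succ * ystar i.succ := by
    rw [Fin.sum_univ_succ, hb0, zero_mul, zero_add]
  have htrunc : (C - ∑ i : Fin m, ystar i.succ • A i.succ).toBlocks₂₂ =
      (C - ∑ i, ystar i • A i).toBlocks₂₂ := by
    ext i j
    simp [Fin.sum_univ_succ, hA0, toBlocks₂₂]
  exact ⟨bound, htrunc ▸ hystar.submatrix Sum.inr, fun z hz => hobj ▸ bound z hz⟩

/-- Under strong duality with attainment, the Sieve-SDP reduction changes neither the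
primal nor the dual optimal value: every (D_pre)-feasible `z` has objective value at
most `Σ bᵢ yᵢ*`, and the truncation of `y*` is an optimal solution of (D_pre). -/
theorem sieve_strong_duality_preserved (r s m : ℕ)
    (A : Fin (m + 1) → Matrix (Fin r ⊕ Fin s) (Fin r ⊕ Fin s) ℝ)
    (hA : ∀ i, (A i).IsSymm)
    (C : Matrix (Fin r ⊕ Fin s) (Fin r ⊕ Fin s) ℝ) (hC : C.IsSymm)
    (D : Matrix (Fin r) (Fin r) ℝ) (hD : D.PosDef)
    (hA0 : A 0 = fromBlocks D 0 0 0)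
    (b : Fin (m + 1) → ℝ) (hb0 : b 0 = 0)
    (Xstar : Matrix (Fin r ⊕ Fin s) (Fin r ⊕ Fin s) ℝ) (hXstar : Xstar.PosSemidef)
    (hXfeas : ∀ i, (A i * Xstar).trace = b i)
    (ystar : Fin (m + 1) → ℝ) (hystar : (C - ∑ i, ystar i • A i).PosSemidef)
    (hgap : (C * Xstar).trace = ∑ i, b i * ystar i) :
    (∀ z : Fin m → ℝ, ((C - ∑ i : Fin m, z i • A i.succ).toBlocks₂₂).PosSemidef →
        ∑ i : Fin m, b i.succ * z i ≤ ∑ i, b i * ystar i) ∧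
    ((C - ∑ i : Fin m, ystar i.succ • A i.succ).toBlocks₂₂).PosSemidef ∧
    (∀ z : Fin m → ℝ, ((C - ∑ i : Fin m, z i • A i.succ).toBlocks₂₂).PosSemidef →
        ∑ i : Fin m, b i.succ * z i ≤ ∑ i : Fin m, b i.succ * ystar i.succ) :=
  sieve_strong_duality_preserved_general r s m A C D hD hA0 b hb0 Xstar hXstar hXfeas ystar hystar
    hgap
end
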